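/- Assume the regression model $Y_i = m(X_i) + \epsilon_i$ with i.i.d. data, $\mathbb{E}[\epsilon_1] = 0$, $\mathrm{Var}(\epsilon_1) = \sigma^2 < \infty$, $\epsilon_i$ independent of $X_i$ and of the OOB estimator $m_n^{OOB}(X_i)$. Assume the sequences $\{Y_i - m(X_i)\}$ and $\{m(X_i) - m_n^{OOB}(X_i)\}$ are identically distributed in $i$, and $\mathbb{E}[(m(X_1) - m_n^{OOB}(X_1))^2] \to 0$. Then the sample variance of the OOB residuals, $\hat{\sigma}_{RF}^2 = \tfrac{1}{n}\sum_{i=1}^n(\hat{\epsilon}_i - \bar{\epsilon}_\cdot)^2$ with $\hat{\epsilon}_i = Y_i - m_n^{OOB}(X_i)$ and $\bar{\epsilon}_\cdot = \tfrac{1}{n}\sum_i \hat{\epsilon}_i$, converges to $\sigma^2$ in $L_1$ as $n \to \infty$. -/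

import Mathlib

open MeasureTheory ProbabilityTheory Filter

lemma centered_sum_sq (n : ℕ) (f : ℕ → ℝ) :
    ∑ i ∈ Finset.range n, (f i - (1 / (n : ℝ)) * ∑ j ∈ Finset.range n, f j) ^ 2
      = ∑ i ∈ Finset.range n, (f i) ^ 2
        - (n : ℝ) * ((1 / (n : ℝ)) * ∑ j ∈ Finset.range n, f j) ^ 2 := by
  rcases Nat.eq_zero_or_pos n with rfl | hn
  · simp
  have hn' : (n : ℝ) ≠ 0 := Nat.cast_ne_zero.2 hn.ne'
  set s := ∑ j ∈ Finset.range n, f j with hs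
  have h : ∀ i ∈ Finset.range n,
      (f i - (1 / (n : ℝ)) * s) ^ 2
        = (f i) ^ 2 - (2 * ((1 / (n : ℝ)) * s)) * f i + ((1 / (n : ℝ)) * s) ^ 2 := by
    intro i _; ring
  rw [Finset.sum_congr rfl h]
  rw [Finset.sum_add_distrib, Finset.sum_sub_distrib, ← Finset.mul_sum, ← hs,
    Finset.sum_const, Finset.card_range, nsmul_eq_mul]
  field_simp
  ring

lemma pointwise_bound (n : ℕ) (t : ℝ) (ht : 0 < t) (e d a : ℕ → ℝ)
    (ha : ∀ i, a i = e i + d i) (σ2 : ℝ) :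
    |(1 / (n : ℝ)) * ∑ i ∈ Finset.range n,
        (a i - (1 / (n : ℝ)) * ∑ j ∈ Finset.range n, a j) ^ 2 - σ2|
      ≤ |(1 / (n : ℝ)) * ∑ i ∈ Finset.range n, (e i) ^ 2 - σ2|
        + ((1 / (n : ℝ)) * ∑ j ∈ Finset.range n, e j) ^ 2
        + t * ((1 / (n : ℝ)) * ∑ i ∈ Finset.range n, (e i) ^ 2)
        + (1 + 1 / t) * ((1 / (n : ℝ)) * ∑ i ∈ Finset.range n, (d i) ^ 2) := by
  rcases Nat.eq_zero_or_pos n with rfl | hn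
  · simp
  have hn' : (n : ℝ) ≠ 0 := Nat.cast_ne_zero.2 hn.ne'
  set c : ℝ := 1 / (n : ℝ) with hc
  have hc0 : 0 ≤ c := by rw [hc]; positivity
  have hcn : c * (n : ℝ) = 1 := by rw [hc]; field_simp
  set μe : ℝ := c * ∑ j ∈ Finset.range n, e j with hμe
  set μd : ℝ := c * ∑ j ∈ Finset.range n, d j with hμd
  set A : ℝ := c * ∑ i ∈ Finset.range n, (e i - μe) ^ 2 with hA
  set B : ℝ := c * ∑ i ∈ Finset.range n, (d i - μd) ^ 2 with hB
  set C : ℝ := c * ∑ i ∈ Finset.range n, (e i - μe) * (d i - μd) with hC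
  set W : ℝ := c * ∑ i ∈ Finset.range n, (e i) ^ 2 with hW
  set V : ℝ := c * ∑ i ∈ Finset.range n, (d i) ^ 2 with hV
  have hma : c * ∑ j ∈ Finset.range n, a j = μe + μd := by
    rw [hμe, hμd]
    simp only [ha, Finset.sum_add_distrib]
    ring
  have hS : c * ∑ i ∈ Finset.range n,
      (a i - c * ∑ j ∈ Finset.range n, a j) ^ 2 = A + 2 * C + B := by
    rw [hma]
    have h1 : ∀ i ∈ Finset.range n,
        (a i - (μe + μd)) ^ 2
          = (e i - μe) ^ 2 + 2 * ((e i - μe) * (d i - μd)) + (d i - μd) ^ 2 := by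
      intro i _; rw [ha i]; ring
    rw [Finset.sum_congr rfl h1, Finset.sum_add_distrib, Finset.sum_add_distrib,
      ← Finset.mul_sum]
    rw [hA, hB, hC]
    ring
  have hAW : A = W - μe ^ 2 := by
    have h := centered_sum_sq n e
    rw [← hc, ← hμe] at h
    rw [hA, h, mul_sub, ← mul_assoc, hcn, one_mul, ← hW]
  have hBV : B = V - μd ^ 2 := by
    have h := centered_sum_sq n d
    rw [← hc, ← hμd] at h
    rw [hB, h, mul_sub, ← mul_assoc, hcn, one_mul, ← hV]
  have hA0 : 0 ≤ A := mul_nonneg hc0 (Finset.sum_nonneg fun i _ => sq_nonneg _)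
  have hB0 : 0 ≤ B := mul_nonneg hc0 (Finset.sum_nonneg fun i _ => sq_nonneg _)
  have hCS : C ^ 2 ≤ A * B := by
    have h := Finset.sum_mul_sq_le_sq_mul_sq (Finset.range n)
      (fun i => e i - μe) (fun i => d i - μd)
    calc C ^ 2 = c ^ 2 * (∑ i ∈ Finset.range n, (e i - μe) * (d i - μd)) ^ 2 := by
          rw [hC]; ring
      _ ≤ c ^ 2 * ((∑ i ∈ Finset.range n, (e i - μe) ^ 2)
            * ∑ i ∈ Finset.range n, (d i - μd) ^ 2) := by
          gcongr
      _ = A * B := by rw [hA, hB]; ring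
  have hst : Real.sqrt t ≠ 0 := Real.sqrt_ne_zero'.2 ht
  have h2C : 2 * |C| ≤ t * A + B / t := by
    have h1 : |C| ≤ Real.sqrt A * Real.sqrt B := by
      rw [← Real.sqrt_sq_eq_abs, ← Real.sqrt_mul hA0]
      exact Real.sqrt_le_sqrt hCS
    have e1 : Real.sqrt A * Real.sqrt B
        = (Real.sqrt t * Real.sqrt A) * (Real.sqrt B / Real.sqrt t) := by
      field_simp
    have h2 := two_mul_le_add_sq (Real.sqrt t * Real.sqrt A) (Real.sqrt B / Real.sqrt t)
    have e2 : (Real.sqrt t * Real.sqrt A) ^ 2 = t * A := by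
      rw [mul_pow, Real.sq_sqrt ht.le, Real.sq_sqrt hA0]
    have e3 : (Real.sqrt B / Real.sqrt t) ^ 2 = B / t := by
      rw [div_pow, Real.sq_sqrt hB0, Real.sq_sqrt ht.le]
    rw [e2, e3] at h2
    rw [e1] at h1
    linarith
  have habs : |A + 2 * C + B - σ2| ≤ |A - σ2| + 2 * |C| + B := by
    have e0 : A + 2 * C + B - σ2 = (A - σ2 + 2 * C) + B := by ring
    rw [e0]
    have h1 := abs_add_le (A - σ2 + 2 * C) B
    have h2 := abs_add_le (A - σ2) (2 * C)
    have h3 : |2 * C| = 2 * |C| := by rw [abs_mul]; norm_num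
    have h4 : |B| = B := abs_of_nonneg hB0
    linarith
  have habs2 : |A - σ2| ≤ |W - σ2| + μe ^ 2 := by
    have e0 : A - σ2 = (W - σ2) + -(μe ^ 2) := by rw [hAW]; ring
    rw [e0]
    refine (abs_add_le _ _).trans ?_
    rw [abs_neg]
    have : |μe ^ 2| = μe ^ 2 := abs_of_nonneg (sq_nonneg _)
    rw [this]
  have hALEW : A ≤ W := by rw [hAW]; linarith [sq_nonneg μe]
  have htAW : t * A ≤ t * W := mul_le_mul_of_nonneg_left hALEW ht.le
  have hBLEV : B ≤ V := by rw [hBV]; linarith [sq_nonneg μd]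
  have hBdiv : B / t ≤ V / t := by gcongr
  have hexp : (1 + 1 / t) * V = V + V / t := by
    field_simp
  rw [hS, hexp]
  linarith

/-- Main consistency theorem (Theorem 2): under the regression model `Y i = m(X i) + ε i`
with i.i.d. centered errors of variance `σ²`, independent of `X i` and of the OOB estimate
`G n i = mₙᴼᴼᴮ(X i)`, identically distributed pairs `(m(X i), G n i)` and
`E[(m(X 0) - G n 0)²] → 0`, the sample variance of the OOB residuals
`σ̂²_RF = (1/n) ∑ᵢ (ε̂ᵢ - ε̄)²` with `ε̂ᵢ = Y i - G n i` converges to `σ²` in `L₁`. -/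
theorem oob_residual_variance_L1_consistent
    {Ω E : Type*} [MeasurableSpace Ω] [MeasurableSpace E]
    {μ : Measure Ω} [IsProbabilityMeasure μ]
    (X : ℕ → Ω → E) (ε : ℕ → Ω → ℝ) (m : E → ℝ) (G : ℕ → ℕ → Ω → ℝ) (σ2 : ℝ)
    (hXmeas : ∀ i, Measurable (X i)) (hm : Measurable m)
    (hεmeas : ∀ i, Measurable (ε i)) (hGmeas : ∀ n i, Measurable (G n i))
    (hε_indep : iIndepFun ε μ)
    (hε_ident : ∀ i, Measure.map (ε i) μ = Measure.map (ε 0) μ)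
    (hε_mean : ∀ i, ∫ ω, ε i ω ∂μ = 0)
    (hε_var : ∀ i, ∫ ω, (ε i ω) ^ 2 ∂μ = σ2)
    (hε_L2 : ∀ i, MemLp (ε i) 2 μ)
    (hmX_L2 : ∀ i, MemLp (fun ω => m (X i ω)) 2 μ)
    (hG_L2 : ∀ n i, MemLp (G n i) 2 μ)
    -- ε i is independent of (m(X i), G n i)
    (hindep : ∀ n i, IndepFun (ε i) (fun ω => (m (X i ω), G n i ω)) μ)
    -- the pairs (m(X i), G n i) are identically distributed in i
    (hident : ∀ n i, Measure.map (fun ω => (m (X i ω), G n i ω)) μ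
        = Measure.map (fun ω => (m (X 0 ω), G n 0 ω)) μ)
    -- L₂-consistency of the OOB estimator
    (hcons : Tendsto (fun n => ∫ ω, (m (X 0 ω) - G n 0 ω) ^ 2 ∂μ) atTop (nhds 0)) :
    Tendsto
      (fun (n : ℕ) => ∫ ω,
        |(1 / (n : ℝ)) * ∑ i ∈ Finset.range n,
            ((m (X i ω) + ε i ω - G n i ω) -
              (1 / (n : ℝ)) * ∑ j ∈ Finset.range n, (m (X j ω) + ε j ω - G n j ω)) ^ 2
          - σ2| ∂μ)
      atTop (nhds 0) := by
  -- basic facts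
  have hσ2 : 0 ≤ σ2 := by
    rw [← hε_var 0]; exact integral_nonneg fun ω => sq_nonneg _
  have hεsq_int : ∀ i, Integrable (fun ω => (ε i ω) ^ 2) μ := fun i => (hε_L2 i).integrable_sq
  have hD_L2 : ∀ n i, MemLp (fun ω => m (X i ω) - G n i ω) 2 μ :=
    fun n i => (hmX_L2 i).sub (hG_L2 n i)
  have hDsq_int : ∀ n i, Integrable (fun ω => (m (X i ω) - G n i ω) ^ 2) μ :=
    fun n i => (hD_L2 n i).integrable_sq
  set δ : ℕ → ℝ := fun n => ∫ ω, (m (X 0 ω) - G n 0 ω) ^ 2 ∂μ with hδdef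
  have hδ0 : ∀ n, 0 ≤ δ n := fun n => integral_nonneg fun ω => sq_nonneg _
  -- identically distributed second moments of D
  have hδi : ∀ n i, ∫ ω, (m (X i ω) - G n i ω) ^ 2 ∂μ = δ n := by
    intro n i
    have hφ : Measurable (fun p : ℝ × ℝ => (p.1 - p.2) ^ 2) :=
      (measurable_fst.sub measurable_snd).pow_const 2
    have hpair : ∀ j, AEMeasurable (fun ω => (m (X j ω), G n j ω)) μ := fun j =>
      (((hm.comp (hXmeas j)).prodMk (hGmeas n j))).aemeasurable
    calc ∫ ω, (m (X i ω) - G n i ω) ^ 2 ∂μ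
        = ∫ p, (fun p : ℝ × ℝ => (p.1 - p.2) ^ 2) p
            ∂(Measure.map (fun ω => (m (X i ω), G n i ω)) μ) := by
          rw [integral_map (hpair i) hφ.aestronglyMeasurable]
      _ = ∫ p, (fun p : ℝ × ℝ => (p.1 - p.2) ^ 2) p
            ∂(Measure.map (fun ω => (m (X 0 ω), G n 0 ω)) μ) := by rw [hident n i]
      _ = δ n := by rw [integral_map (hpair 0) hφ.aestronglyMeasurable]
  -- L¹ law of large numbers for ε²
  have hsln : Tendsto (fun (n : ℕ) => ∫ ω,
      |(1 / (n : ℝ)) * ∑ i ∈ Finset.range n, (ε i ω) ^ 2 - σ2| ∂μ) atTop (nhds 0) := by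
    have hident' : ∀ i, IdentDistrib (fun ω => (ε i ω) ^ 2) (fun ω => (ε 0 ω) ^ 2) μ μ := fun i =>
      IdentDistrib.comp ⟨(hεmeas i).aemeasurable, (hεmeas 0).aemeasurable, hε_ident i⟩
        (measurable_id.pow_const 2)
    have hindep' : Pairwise (fun i j =>
        IndepFun (fun ω => (ε i ω) ^ 2) (fun ω => (ε j ω) ^ 2) μ) := fun i j hij =>
      (hε_indep.indepFun hij).comp (measurable_id.pow_const 2) (measurable_id.pow_const 2)
    have hmem : MemLp (fun ω => (ε 0 ω) ^ 2) 1 μ := memLp_one_iff_integrable.2 (hεsq_int 0)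
    have h0 := strong_law_Lp (le_refl (1 : ENNReal)) ENNReal.one_ne_top _ hmem hindep' hident'
    have hμX : (μ[fun ω => (ε 0 ω) ^ 2]) = σ2 := hε_var 0
    rw [hμX] at h0
    have key : ∀ n : ℕ,
        ∫ ω, |(1 / (n : ℝ)) * ∑ i ∈ Finset.range n, (ε i ω) ^ 2 - σ2| ∂μ
          = (eLpNorm (fun ω => (n : ℝ)⁻¹ • (∑ i ∈ Finset.range n, (ε i ω) ^ 2) - σ2)
              1 μ).toReal := by
      intro n
      have hfeq : (fun ω => (n : ℝ)⁻¹ • (∑ i ∈ Finset.range n, (ε i ω) ^ 2) - σ2)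
          = fun ω => (1 / (n : ℝ)) * ∑ i ∈ Finset.range n, (ε i ω) ^ 2 - σ2 := by
        funext ω; rw [smul_eq_mul, one_div]
      rw [hfeq]
      have hgm : AEStronglyMeasurable
          (fun ω => (1 / (n : ℝ)) * ∑ i ∈ Finset.range n, (ε i ω) ^ 2 - σ2) μ := by
        apply AEStronglyMeasurable.sub _ aestronglyMeasurable_const
        exact (Finset.aemeasurable_fun_sum _ fun i _ =>
          ((hεmeas i).pow_const 2).aemeasurable).const_mul _ |>.aestronglyMeasurable
      calc ∫ ω, |(1 / (n : ℝ)) * ∑ i ∈ Finset.range n, (ε i ω) ^ 2 - σ2| ∂μ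
          = ∫ ω, ‖(1 / (n : ℝ)) * ∑ i ∈ Finset.range n, (ε i ω) ^ 2 - σ2‖ ∂μ := by
            simp [Real.norm_eq_abs]
        _ = (∫⁻ ω, ‖(1 / (n : ℝ)) * ∑ i ∈ Finset.range n, (ε i ω) ^ 2 - σ2‖ₑ ∂μ).toReal :=
            integral_norm_eq_lintegral_enorm hgm
        _ = _ := by rw [eLpNorm_one_eq_lintegral_enorm]
    have h1 : Tendsto (fun n : ℕ => (eLpNorm
        (fun ω => (n : ℝ)⁻¹ • (∑ i ∈ Finset.range n, (ε i ω) ^ 2) - σ2) 1 μ).toReal)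
        atTop (nhds 0) := by
      simpa [Function.comp_def] using (ENNReal.tendsto_toReal (by simp)).comp h0
    exact h1.congr fun n => (key n).symm
  -- second moment of the empirical mean of ε
  have hEb_val : ∀ n : ℕ, 0 < n →
      ∫ ω, ((1 / (n : ℝ)) * ∑ j ∈ Finset.range n, ε j ω) ^ 2 ∂μ = σ2 / n := by
    intro n hn
    have hn' : (n : ℝ) ≠ 0 := Nat.cast_ne_zero.2 hn.ne'
    have hvar_sum : variance (∑ i ∈ Finset.range n, ε i) μ
        = ∑ i ∈ Finset.range n, variance (ε i) μ :=
      IndepFun.variance_sum (fun i _ => hε_L2 i) (fun i _ j _ hij => hε_indep.indepFun hij)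
    have hvar_i : ∀ i, variance (ε i) μ = σ2 := by
      intro i
      rw [variance_eq_sub (hε_L2 i)]
      have h1 : μ[(ε i) ^ 2] = σ2 := hε_var i
      have h2 : μ[ε i] = 0 := hε_mean i
      rw [h1, h2]; ring
    have hsum_mean : μ[(∑ i ∈ Finset.range n, ε i)] = 0 := by
      simp only [Finset.sum_apply]
      rw [integral_finset_sum _ (fun i _ => (hε_L2 i).integrable one_le_two)]
      simp [hε_mean]
    have h3 := variance_eq_sub (memLp_finset_sum' (Finset.range n) (fun i _ => hε_L2 i))
    rw [hvar_sum, hsum_mean] at h3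
    have h4 : μ[(∑ i ∈ Finset.range n, ε i) ^ 2]
        = ∫ ω, (∑ i ∈ Finset.range n, ε i ω) ^ 2 ∂μ := by
      simp only [Pi.pow_apply, Finset.sum_apply]
    have h5 : ∫ ω, (∑ i ∈ Finset.range n, ε i ω) ^ 2 ∂μ = (n : ℝ) * σ2 := by
      rw [← h4]
      simp only [hvar_i, Finset.sum_const, Finset.card_range, nsmul_eq_mul] at h3
      linarith [h3]
    have h6 : ∀ ω : Ω, ((1 / (n : ℝ)) * ∑ j ∈ Finset.range n, ε j ω) ^ 2
        = (1 / (n : ℝ)) ^ 2 * (∑ j ∈ Finset.range n, ε j ω) ^ 2 := fun ω => by ring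
    simp_rw [h6]
    rw [integral_const_mul, h5]
    field_simp
  -- integrability
  have hW_int : ∀ n : ℕ, Integrable
      (fun ω => (1 / (n : ℝ)) * ∑ i ∈ Finset.range n, (ε i ω) ^ 2) μ :=
    fun n => (integrable_finset_sum _ fun i _ => hεsq_int i).const_mul _
  have hWabs_int : ∀ n : ℕ, Integrable
      (fun ω => |(1 / (n : ℝ)) * ∑ i ∈ Finset.range n, (ε i ω) ^ 2 - σ2|) μ :=
    fun n => ((hW_int n).sub (integrable_const σ2)).abs
  have hEb_int : ∀ n : ℕ, Integrable
      (fun ω => ((1 / (n : ℝ)) * ∑ j ∈ Finset.range n, ε j ω) ^ 2) μ := fun n =>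
    MemLp.integrable_sq ((memLp_finset_sum (Finset.range n) fun i _ => hε_L2 i).const_mul _)
  have hV_int : ∀ n : ℕ, Integrable
      (fun ω => (1 / (n : ℝ)) * ∑ i ∈ Finset.range n, (m (X i ω) - G n i ω) ^ 2) μ :=
    fun n => (integrable_finset_sum _ fun i _ => hDsq_int n i).const_mul _
  -- values
  have hW_val : ∀ n : ℕ, 0 < n →
      ∫ ω, (1 / (n : ℝ)) * ∑ i ∈ Finset.range n, (ε i ω) ^ 2 ∂μ = σ2 := by
    intro n hn
    have hn' : (n : ℝ) ≠ 0 := Nat.cast_ne_zero.2 hn.ne'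
    rw [integral_const_mul, integral_finset_sum _ (fun i _ => hεsq_int i)]
    simp only [hε_var, Finset.sum_const, Finset.card_range, nsmul_eq_mul]
    field_simp
  have hV_val : ∀ n : ℕ, 0 < n →
      ∫ ω, (1 / (n : ℝ)) * ∑ i ∈ Finset.range n, (m (X i ω) - G n i ω) ^ 2 ∂μ = δ n := by
    intro n hn
    have hn' : (n : ℝ) ≠ 0 := Nat.cast_ne_zero.2 hn.ne'
    rw [integral_const_mul, integral_finset_sum _ (fun i _ => hDsq_int n i)]
    simp only [hδi n, Finset.sum_const, Finset.card_range, nsmul_eq_mul]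
    field_simp
  -- the main bound
  have hbound : ∀ t : ℝ, 0 < t → ∀ n : ℕ, 0 < n →
      (∫ ω, |(1 / (n : ℝ)) * ∑ i ∈ Finset.range n,
          ((m (X i ω) + ε i ω - G n i ω) -
            (1 / (n : ℝ)) * ∑ j ∈ Finset.range n, (m (X j ω) + ε j ω - G n j ω)) ^ 2
        - σ2| ∂μ)
      ≤ (∫ ω, |(1 / (n : ℝ)) * ∑ i ∈ Finset.range n, (ε i ω) ^ 2 - σ2| ∂μ)
        + σ2 / n + t * σ2 + (1 + 1 / t) * δ n := by
    intro t ht n hn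
    have hptw : ∀ ω, |(1 / (n : ℝ)) * ∑ i ∈ Finset.range n,
          ((m (X i ω) + ε i ω - G n i ω) -
            (1 / (n : ℝ)) * ∑ j ∈ Finset.range n, (m (X j ω) + ε j ω - G n j ω)) ^ 2
        - σ2|
        ≤ |(1 / (n : ℝ)) * ∑ i ∈ Finset.range n, (ε i ω) ^ 2 - σ2|
          + ((1 / (n : ℝ)) * ∑ j ∈ Finset.range n, ε j ω) ^ 2
          + t * ((1 / (n : ℝ)) * ∑ i ∈ Finset.range n, (ε i ω) ^ 2)
          + (1 + 1 / t) * ((1 / (n : ℝ)) * ∑ i ∈ Finset.range n, (m (X i ω) - G n i ω) ^ 2) :=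
      fun ω => pointwise_bound n t ht (fun i => ε i ω) (fun i => m (X i ω) - G n i ω)
        (fun i => m (X i ω) + ε i ω - G n i ω) (fun i => by ring) σ2
    have hint : Integrable (fun ω =>
        |(1 / (n : ℝ)) * ∑ i ∈ Finset.range n, (ε i ω) ^ 2 - σ2|
          + ((1 / (n : ℝ)) * ∑ j ∈ Finset.range n, ε j ω) ^ 2
          + t * ((1 / (n : ℝ)) * ∑ i ∈ Finset.range n, (ε i ω) ^ 2)
          + (1 + 1 / t) * ((1 / (n : ℝ)) * ∑ i ∈ Finset.range n, (m (X i ω) - G n i ω) ^ 2)) μ :=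
      (((hWabs_int n).add (hEb_int n)).add ((hW_int n).const_mul t)).add
        ((hV_int n).const_mul _)
    have hmono := integral_mono_of_nonneg (ae_of_all _ fun ω => abs_nonneg _) hint
      (ae_of_all _ hptw)
    refine hmono.trans (le_of_eq ?_)
    have i12 : Integrable (fun ω =>
        |(1 / (n : ℝ)) * ∑ i ∈ Finset.range n, (ε i ω) ^ 2 - σ2|
          + ((1 / (n : ℝ)) * ∑ j ∈ Finset.range n, ε j ω) ^ 2) μ :=
      (hWabs_int n).add (hEb_int n)
    have i123 : Integrable (fun ω =>
        |(1 / (n : ℝ)) * ∑ i ∈ Finset.range n, (ε i ω) ^ 2 - σ2|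
          + ((1 / (n : ℝ)) * ∑ j ∈ Finset.range n, ε j ω) ^ 2
          + t * ((1 / (n : ℝ)) * ∑ i ∈ Finset.range n, (ε i ω) ^ 2)) μ :=
      i12.add ((hW_int n).const_mul t)
    have i4 : Integrable (fun ω =>
        (1 + 1 / t) * ((1 / (n : ℝ)) * ∑ i ∈ Finset.range n, (m (X i ω) - G n i ω) ^ 2)) μ :=
      (hV_int n).const_mul _
    have i3 : Integrable (fun ω =>
        t * ((1 / (n : ℝ)) * ∑ i ∈ Finset.range n, (ε i ω) ^ 2)) μ :=
      (hW_int n).const_mul t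
    rw [integral_add i123 i4, integral_add i12 i3, integral_add (hWabs_int n) (hEb_int n)]
    have hn' : (n : ℝ) ≠ 0 := Nat.cast_ne_zero.2 hn.ne'
    have hsumε : ∫ a, (∑ i ∈ Finset.range n, (ε i a) ^ 2) ∂μ = (n : ℝ) * σ2 := by
      rw [integral_finset_sum _ (fun i _ => hεsq_int i)]
      simp [hε_var, Finset.card_range]
    have hsumD : ∫ a, (∑ i ∈ Finset.range n, (m (X i a) - G n i a) ^ 2) ∂μ
        = (n : ℝ) * δ n := by
      rw [integral_finset_sum _ (fun i _ => hDsq_int n i)]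
      simp [hδi n, Finset.card_range]
    rw [integral_const_mul, integral_const_mul, integral_const_mul, integral_const_mul,
      hsumε, hsumD, hEb_val n hn]
    field_simp
  -- conclusion
  rw [Metric.tendsto_nhds]
  intro ϵ hϵ
  set t : ℝ := ϵ / (4 * (σ2 + 1)) with htdef
  have ht : 0 < t := by rw [htdef]; positivity
  have htσ : t * σ2 < ϵ / 4 := by
    rw [htdef, div_mul_eq_mul_div, div_lt_div_iff₀ (by positivity) (by norm_num)]
    nlinarith
  have hcons' : Tendsto (fun n => (1 + 1 / t) * δ n) atTop (nhds 0) := by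
    simpa using hcons.const_mul (1 + 1 / t)
  have e1 := hsln.eventually (gt_mem_nhds (show (0 : ℝ) < ϵ / 4 by positivity))
  have e2 := (tendsto_const_div_atTop_nhds_zero_nat σ2).eventually
    (gt_mem_nhds (show (0 : ℝ) < ϵ / 4 by positivity))
  have e3 := hcons'.eventually (gt_mem_nhds (show (0 : ℝ) < ϵ / 4 by positivity))
  filter_upwards [e1, e2, e3, eventually_gt_atTop 0] with n h1 h2 h3 h4
  have hb := hbound t ht n h4
  have hF0 : 0 ≤ ∫ ω, |(1 / (n : ℝ)) * ∑ i ∈ Finset.range n,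
      ((m (X i ω) + ε i ω - G n i ω) -
        (1 / (n : ℝ)) * ∑ j ∈ Finset.range n, (m (X j ω) + ε j ω - G n j ω)) ^ 2
    - σ2| ∂μ := integral_nonneg fun ω => abs_nonneg _
  rw [Real.dist_eq, sub_zero, abs_of_nonneg hF0]
  refine lt_of_le_of_lt hb ?_
  linarith
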